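/- arXiv:1504.07672 — 7 statements merged into one kernel-verified Lean document; each statement's English description precedes it below -/
import Mathlib

section
/- Let P be a symmetric positive semidefinite n×n real matrix and q ∈ ℝⁿ, and f(x) = xᵀPx + 2qᵀx. If q does not lie in the range (column space) of P, then f is unbounded below on the integer lattice ℤⁿ; that is, the set {f(x) : x ∈ ℤⁿ} is not bounded below. -/
/-!
Since `q` is not in the range of the symmetric matrix `P`, the Fredholm alternative gives a
kernel vector `w` of `P` with `qᵀw ≠ 0`. Along the line `t ↦ x + t w` the objective is affine,
`f(x + t w) = f(x) + 2 t qᵀw`, so it tends to `-∞` in one direction. Rounding `t w` to the nearest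
lattice point moves it by a vector `e` with `‖e‖∞ ≤ 1/2`, and `f` is bounded above on that
compact cube, so the lattice values of `f` are unbounded below as well.
-/

open Matrix

theorem Matrix.exists_vecMul_eq_zero_dotProduct_ne_zero {K m n : Type*} [Field K] [Fintype m]
    [Fintype n] (A : Matrix m n K) {q : m → K} (hq : ¬ ∃ v, A *ᵥ v = q) :
    ∃ u : m → K, u ᵥ* A = 0 ∧ u ⬝ᵥ q ≠ 0 := by
  classical
  have hq' : q ∉ LinearMap.range A.mulVecLin := fun ⟨v, hv⟩ => hq ⟨v, hv⟩
  obtain ⟨f, hfq, hrange⟩ := Submodule.exists_le_ker_of_notMem hq'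
  set u := (dotProductEquiv K m).symm f
  have hf : ∀ x, f x = u ⬝ᵥ x := fun x => by
    rw [← dotProductEquiv_apply_apply, LinearEquiv.apply_symm_apply]
  refine ⟨u, dotProduct_eq_zero _ fun v => ?_, by rwa [← hf]⟩
  rw [← dotProduct_mulVec, ← hf]
  exact hrange ⟨v, rfl⟩

section QuadObjective

variable {n : Type*} [Fintype n]

def quadObjective (P : Matrix n n ℝ) (q x : n → ℝ) : ℝ :=
  x ⬝ᵥ (P *ᵥ x) + 2 * (q ⬝ᵥ x)

theorem continuous_quadObjective (P : Matrix n n ℝ) (q : n → ℝ) :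
    Continuous (quadObjective P q) := by
  unfold quadObjective
  fun_prop

theorem quadObjective_add_smul {P : Matrix n n ℝ} (hP : P.IsSymm) (q : n → ℝ) {w : n → ℝ}
    (hw : P *ᵥ w = 0) (x : n → ℝ) (t : ℝ) :
    quadObjective P q (x + t • w) = quadObjective P q x + 2 * t * (q ⬝ᵥ w) := by
  have hwx : w ⬝ᵥ (P *ᵥ x) = 0 := by
    rw [dotProduct_mulVec, ← mulVec_transpose, hP.eq, hw, zero_dotProduct]
  simp only [quadObjective, mulVec_add, mulVec_smul, hw, smul_zero, add_zero, add_dotProduct,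
    smul_dotProduct, hwx, dotProduct_add, dotProduct_smul, smul_eq_mul]
  ring

theorem norm_round_sub_le (y : n → ℝ) : ‖(fun i => (round (y i) : ℝ)) - y‖ ≤ 1 / 2 :=
  (pi_norm_le_iff_of_nonneg (by norm_num)).2 fun i => by
    simpa only [Pi.sub_apply, Real.norm_eq_abs, abs_sub_comm] using abs_sub_round (y i)

theorem exists_int_quadObjective_lt {P : Matrix n n ℝ} (hP : P.IsSymm) {q w : n → ℝ}
    (hw : P *ᵥ w = 0) (hqw : q ⬝ᵥ w ≠ 0) (b : ℝ) :
    ∃ x : n → ℤ, quadObjective P q (fun i => (x i : ℝ)) < b := by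
  obtain ⟨C, hC⟩ := (isCompact_closedBall (0 : n → ℝ) (1 / 2)).bddAbove_image
    (continuous_quadObjective P q).continuousOn
  set t := (b - C - 1) / (2 * (q ⬝ᵥ w))
  set x : n → ℤ := fun i => round (t * w i)
  set e : n → ℝ := (fun i => (x i : ℝ)) - t • w
  have he : e ∈ Metric.closedBall 0 (1 / 2) :=
    mem_closedBall_zero_iff.2 (norm_round_sub_le (t • w))
  have hfe : quadObjective P q e ≤ C := hC ⟨e, he, rfl⟩
  have ht : 2 * t * (q ⬝ᵥ w) = b - C - 1 := by
    simp only [t]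
    field_simp
  refine ⟨x, ?_⟩
  calc quadObjective P q (fun i => (x i : ℝ))
      = quadObjective P q (e + t • w) := by rw [sub_add_cancel]
    _ = quadObjective P q e + 2 * t * (q ⬝ᵥ w) := quadObjective_add_smul hP q hw e t
    _ < b := by linarith

theorem not_bddBelow_range_quadObjective_int {P : Matrix n n ℝ} (hP : P.IsSymm) {q : n → ℝ}
    (hq : ¬ ∃ v, P *ᵥ v = q) :
    ¬ BddBelow (Set.range fun x : n → ℤ => quadObjective P q (fun i => (x i : ℝ))) := by
  obtain ⟨w, hwP, hwq⟩ := P.exists_vecMul_eq_zero_dotProduct_ne_zero hq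
  have hPw : P *ᵥ w = 0 := by rw [← hP.eq, mulVec_transpose, hwP]
  rintro ⟨b, hb⟩
  obtain ⟨x, hx⟩ := exists_int_quadObjective_lt hP hPw (by rwa [dotProduct_comm]) b
  exact hx.not_ge (hb ⟨x, rfl⟩)

end QuadObjective

/-- If `q` is not in the range of a symmetric PSD matrix `P`, then
`f(x) = xᵀPx + 2qᵀx` is unbounded below on the integer lattice `ℤⁿ`. -/
theorem stmt_1 (n : ℕ) (P : Matrix (Fin n) (Fin n) ℝ) (hP : P.PosSemidef)
    (q : Fin n → ℝ) (hq : ¬ ∃ v : Fin n → ℝ, P *ᵥ v = q) :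
    ¬ BddBelow {y : ℝ | ∃ x : Fin n → ℤ,
      y = (fun i => (x i : ℝ)) ⬝ᵥ (P *ᵥ fun i => (x i : ℝ))
        + 2 * (q ⬝ᵥ fun i => (x i : ℝ))} := by
  have hsymm : P.IsSymm := isHermitian_iff_isSymm.1 hP.1
  convert not_bddBelow_range_quadObjective_int hsymm hq using 2
  exact Set.ext fun _ => exists_congr fun _ => eq_comm
end

section
/- Let P be a symmetric n×n real matrix, q ∈ ℝⁿ, and f(x) = xᵀPx + 2qᵀx. Suppose λ ∈ ℝⁿ with λ ≥ 0 componentwise and γ ∈ ℝ are such that the (n+1)×(n+1) block matrix [[P − diag(λ), q + (1/2)λ], [(q + (1/2)λ)ᵀ, γ]] is positive semidefinite. Then f(x) ≥ −γ for every x ∈ ℤⁿ. In particular, the optimal value of the dual SDP sup{−γ : λ ≥ 0, block matrix PSD} is a lower bound on the optimal value of the integer problem min_{x∈ℤⁿ} f(x). -/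
open Matrix

/-!
Evaluating the positive semidefinite block matrix at `(x, 1)` gives
`0 ≤ f(x) + γ - ∑ i, λᵢ xᵢ (xᵢ - 1)`: the multipliers `λ` relax the constraints `xᵢ² ≥ xᵢ`,
which every integer satisfies. Since `λ ≥ 0`, the correction term is nonnegative on `ℤⁿ`.
-/

section BlockQuadraticForm

variable {m R : Type*} [Fintype m] [CommRing R]

theorem sumElim_dotProduct_fromBlocks_mulVec_sumElim (A : Matrix m m R) (b : m → R) (c : R)
    (x : m → R) (t : R) :
    Sum.elim x (fun _ : Unit => t) ⬝ᵥ
        (fromBlocks A (of fun i (_ : Unit) => b i) (of fun (_ : Unit) j => b j)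
            (of fun (_ : Unit) (_ : Unit) => c) *ᵥ Sum.elim x (fun _ => t)) =
      x ⬝ᵥ (A *ᵥ x) + 2 * t * (b ⬝ᵥ x) + c * t ^ 2 := by
  have hB : (of fun i (_ : Unit) => b i) *ᵥ (fun _ => t) = t • b := by
    ext i; simp [mulVec, dotProduct, mul_comm]
  have hC : (of fun (_ : Unit) j => b j) *ᵥ x = fun _ => b ⬝ᵥ x := by
    ext; simp [mulVec]
  have hD : (of fun (_ : Unit) (_ : Unit) => c) *ᵥ (fun _ => t) = fun _ => c * t := by
    ext; simp [mulVec]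
  rw [fromBlocks_mulVec, sumElim_dotProduct_sumElim, Sum.elim_comp_inl, Sum.elim_comp_inr, hB, hC,
    hD, dotProduct_add, dotProduct_smul, dotProduct_comm x b]
  simp only [dotProduct, Pi.add_apply, Finset.univ_unique, Finset.sum_singleton, smul_eq_mul]
  ring

theorem Matrix.PosSemidef.le_dotProduct_mulVec_add_of_fromBlocks [PartialOrder R] [StarRing R]
    [TrivialStar R] {A : Matrix m m R} {b : m → R} {c : R}
    (h : (fromBlocks A (of fun i (_ : Unit) => b i) (of fun (_ : Unit) j => b j)
      (of fun (_ : Unit) (_ : Unit) => c)).PosSemidef) (x : m → R) :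
    0 ≤ x ⬝ᵥ (A *ᵥ x) + 2 * (b ⬝ᵥ x) + c := by
  have := h.dotProduct_mulVec_nonneg (Sum.elim x fun _ => 1)
  rwa [star_trivial, sumElim_dotProduct_fromBlocks_mulVec_sumElim, mul_one, one_pow,
    mul_one] at this

end BlockQuadraticForm

theorem dotProduct_sub_diagonal_mulVec_add_two_mul_dotProduct {m : Type*} [Fintype m]
    [DecidableEq m] (P : Matrix m m ℝ) (q lam x : m → ℝ) :
    x ⬝ᵥ ((P - diagonal lam) *ᵥ x) + 2 * ((q + (1 / 2 : ℝ) • lam) ⬝ᵥ x) =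
      x ⬝ᵥ (P *ᵥ x) + 2 * (q ⬝ᵥ x) - ∑ i, lam i * (x i * (x i - 1)) := by
  rw [sub_mulVec, dotProduct_sub, add_dotProduct, smul_dotProduct]
  simp only [dotProduct, mulVec_diagonal, smul_eq_mul, Finset.mul_sum, ← Finset.sum_sub_distrib,
    ← Finset.sum_add_distrib]
  exact Finset.sum_congr rfl fun i _ => by ring

theorem intCast_mul_sub_one_nonneg {R : Type*} [Ring R] [LinearOrder R] [IsStrictOrderedRing R]
    (t : ℤ) : (0 : R) ≤ t * (t - 1) := by
  have : (0 : ℤ) ≤ t * (t - 1) := by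
    rcases le_or_gt t 0 with ht | ht <;> nlinarith
  exact_mod_cast this

theorem stmt_6_general (n : ℕ) (P : Matrix (Fin n) (Fin n) ℝ)
    (q lam : Fin n → ℝ) (hlam : ∀ i, 0 ≤ lam i) (γ : ℝ)
    (hpsd : (Matrix.fromBlocks (P - Matrix.diagonal lam)
        (Matrix.of fun i (_ : Unit) => (q + (1 / 2 : ℝ) • lam) i)
        (Matrix.of fun (_ : Unit) j => (q + (1 / 2 : ℝ) • lam) j)
        (Matrix.of fun (_ : Unit) (_ : Unit) => γ)).PosSemidef) :
    ∀ x : Fin n → ℤ,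
      -γ ≤ (fun i => (x i : ℝ)) ⬝ᵥ (P *ᵥ fun i => (x i : ℝ))
          + 2 * (q ⬝ᵥ fun i => (x i : ℝ)) := by
  intro x
  have hblock := hpsd.le_dotProduct_mulVec_add_of_fromBlocks fun i => (x i : ℝ)
  rw [dotProduct_sub_diagonal_mulVec_add_two_mul_dotProduct] at hblock
  have hrelax : 0 ≤ ∑ i, lam i * ((x i : ℝ) * ((x i : ℝ) - 1)) :=
    Finset.sum_nonneg fun i _ => mul_nonneg (hlam i) (intCast_mul_sub_one_nonneg (x i))
  linarith

/-- Any dual-feasible `(λ, γ)` (i.e. `λ ≥ 0` and the block matrix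
`[[P - diag λ, q + λ/2], [(q + λ/2)ᵀ, γ]]` is PSD) certifies the lower bound
`f(x) ≥ -γ` for all integer `x`. -/
theorem stmt_6 (n : ℕ) (P : Matrix (Fin n) (Fin n) ℝ) (hP : P.IsSymm)
    (q lam : Fin n → ℝ) (hlam : ∀ i, 0 ≤ lam i) (γ : ℝ)
    (hpsd : (Matrix.fromBlocks (P - Matrix.diagonal lam)
        (Matrix.of fun i (_ : Unit) => (q + (1 / 2 : ℝ) • lam) i)
        (Matrix.of fun (_ : Unit) j => (q + (1 / 2 : ℝ) • lam) j)
        (Matrix.of fun (_ : Unit) (_ : Unit) => γ)).PosSemidef) :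
    ∀ x : Fin n → ℤ,
      -γ ≤ (fun i => (x i : ℝ)) ⬝ᵥ (P *ᵥ fun i => (x i : ℝ))
          + 2 * (q ⬝ᵥ fun i => (x i : ℝ)) :=
  stmt_6_general n P q lam hlam γ hpsd
end

section
/- Let P be a symmetric positive definite n×n real matrix with smallest eigenvalue ω_min, q ∈ ℝⁿ, and f(x) = xᵀPx + 2qᵀx. For every α with 0 ≤ α < ω_min, the matrix P − αI is positive definite (hence invertible), and for every x ∈ ℤⁿ, f(x) ≥ −(q + (α/2)𝟏)ᵀ (P − αI)⁻¹ (q + (α/2)𝟏). -/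
/-!
Since `t ≤ t²` for every integer `t`, for `α ≥ 0` and `x ∈ ℤⁿ` we have
`f x ≥ f x - α ∑ xᵢ (xᵢ - 1) = xᵀ (P - αI) x + 2 bᵀ x` with `b = q + (α/2) 𝟏`.
The spectrum of `P - αI` is that of `P` shifted by `-α`, so `P - αI` is positive definite,
and completing the square, `0 ≤ (x + A⁻¹ b)ᵀ A (x + A⁻¹ b)` for `A = P - αI`, bounds the
right-hand side below by `-bᵀ A⁻¹ b`.
-/

open Matrix

theorem one_dotProduct_intCast_le_dotProduct_self {ι : Type*} [Fintype ι] (x : ι → ℤ) :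
    (1 : ι → ℝ) ⬝ᵥ (fun i => (x i : ℝ)) ≤ (fun i => (x i : ℝ)) ⬝ᵥ (fun i => (x i : ℝ)) := by
  simp only [dotProduct, Pi.one_apply, one_mul]
  gcongr with i
  exact_mod_cast (sq (x i)) ▸ Int.le_self_sq (x i)

namespace Matrix

variable {ι : Type*} [Fintype ι] [DecidableEq ι]

open scoped MatrixOrder ComplexOrder in
theorem IsHermitian.posDef_sub_smul_one {𝕜 : Type*} [RCLike 𝕜] {A : Matrix ι ι 𝕜}
    (hA : A.IsHermitian) {c : ℝ} (hc : ∀ i, c < hA.eigenvalues i) : (A - c • 1).PosDef := by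
  rw [← Algebra.algebraMap_eq_smul_one, ← isStrictlyPositive_iff_posDef,
    StarOrderedRing.isStrictlyPositive_iff_spectrum_pos (R := ℝ) _
      (hA.isSelfAdjoint.sub (.algebraMap _ (.all c))),
    ← spectrum.sub_singleton_eq, hA.spectrum_real_eq_range_eigenvalues]
  rintro _ ⟨_, ⟨i, rfl⟩, _, rfl, rfl⟩
  exact sub_pos.2 (hc i)

theorem PosDef.neg_dotProduct_inv_mulVec_le {A : Matrix ι ι ℝ} (hA : A.PosDef) (b v : ι → ℝ) :
    -(b ⬝ᵥ (A⁻¹ *ᵥ b)) ≤ v ⬝ᵥ (A *ᵥ v) + 2 * (b ⬝ᵥ v) := by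
  set w := A⁻¹ *ᵥ b
  have hAw : A *ᵥ w = b := by
    rw [mulVec_mulVec, mul_nonsing_inv _ hA.det_pos.ne'.isUnit, one_mulVec]
  have hwv : w ⬝ᵥ (A *ᵥ v) = v ⬝ᵥ b := by
    have hT : Aᵀ = A := (conjTranspose_eq_transpose_of_trivial A).symm.trans hA.isHermitian
    rw [dotProduct_mulVec, ← hT, vecMul_transpose, hAw, dotProduct_comm]
  have hsq := hA.posSemidef.dotProduct_mulVec_nonneg (v + w)
  simp only [star_trivial, mulVec_add, hAw, add_dotProduct, dotProduct_add, hwv] at hsq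
  linarith [dotProduct_comm v b, dotProduct_comm w b]

end Matrix

/-- For a positive definite `P` and `0 ≤ α < ω_min`, the matrix `P - αI` is positive
definite, and `f(x) ≥ -(q + (α/2)𝟏)ᵀ (P - αI)⁻¹ (q + (α/2)𝟏)` for every integer `x`. -/
theorem stmt_10 (n : ℕ) (P : Matrix (Fin n) (Fin n) ℝ) (hP : P.PosDef)
    (ωmin : ℝ) (hωmin : IsLeast (Set.range hP.1.eigenvalues) ωmin)
    (q : Fin n → ℝ) (α : ℝ) (hα : 0 ≤ α) (hα' : α < ωmin) :
    (P - α • (1 : Matrix (Fin n) (Fin n) ℝ)).PosDef ∧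
      ∀ x : Fin n → ℤ,
        -((q + (α / 2) • (fun _ => 1 : Fin n → ℝ)) ⬝ᵥ
            ((P - α • (1 : Matrix (Fin n) (Fin n) ℝ))⁻¹ *ᵥ
              (q + (α / 2) • (fun _ => 1 : Fin n → ℝ)))) ≤
          (fun i => (x i : ℝ)) ⬝ᵥ (P *ᵥ fun i => (x i : ℝ))
            + 2 * (q ⬝ᵥ fun i => (x i : ℝ)) := by
  have hA : (P - α • (1 : Matrix (Fin n) (Fin n) ℝ)).PosDef :=
    hP.1.posDef_sub_smul_one fun i => hα'.trans_le (hωmin.2 ⟨i, rfl⟩)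
  refine ⟨hA, fun x => ?_⟩
  set v : Fin n → ℝ := fun i => (x i : ℝ)
  set b : Fin n → ℝ := q + (α / 2) • (fun _ => 1 : Fin n → ℝ)
  have hrelax : v ⬝ᵥ ((P - α • 1) *ᵥ v) + 2 * (b ⬝ᵥ v) =
      v ⬝ᵥ (P *ᵥ v) + 2 * (q ⬝ᵥ v) - α * (v ⬝ᵥ v - (fun _ => 1) ⬝ᵥ v) := by
    simp only [b, sub_mulVec, smul_mulVec, one_mulVec, dotProduct_sub, dotProduct_smul,
      add_dotProduct, smul_dotProduct, smul_eq_mul]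
    ring
  have hint : 0 ≤ α * (v ⬝ᵥ v - (fun _ => 1) ⬝ᵥ v) :=
    mul_nonneg hα (sub_nonneg.2 (one_dotProduct_intCast_le_dotProduct_self x))
  linarith [hA.neg_dotProduct_inv_mulVec_le b v]
end

section
/- Let P = Q diag(ω) Qᵀ with Q an orthogonal n×n real matrix and ω ∈ ℝⁿ with all ωᵢ > 0; let ω_min = minᵢ ωᵢ, q ∈ ℝⁿ, s = Qᵀ𝟏, q̃ = Qᵀq, and for 0 ≤ α < ω_min define g(α) = −(q + (α/2)𝟏)ᵀ (P − αI)⁻¹ (q + (α/2)𝟏). Then for all 0 ≤ α < ω_min: g(α) = −Σᵢ (q̃ᵢ² + α sᵢ q̃ᵢ + (1/4)α² sᵢ²)/(ωᵢ − α), and g(α) − g(0) = (αn)/4 − α Σᵢ (1 − α/ωᵢ) ((q̃ᵢ + (1/2)ωᵢ sᵢ)/(ωᵢ − α))². -/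
open Matrix

/-!
In the eigenbasis of `P` everything is diagonal: `P - αI = Q diag(ω - α) Qᵀ`, so the quadratic form
of its inverse at `v = q + (α/2)𝟏` is `∑ᵢ (Qᵀv)ᵢ² / (ωᵢ - α)` with `Qᵀv = q̃ + (α/2)s`. Expanding gives
the first formula; for the second, `∑ᵢ sᵢ² = ‖𝟏‖² = n` lets `αn/4` be split into the summands, after
which `g(α) - g(0)` is a termwise rational identity in `q̃ᵢ, sᵢ, ωᵢ, α`.
-/

variable {m K : Type*} [Fintype m] [DecidableEq m]

section CommRing

variable [CommRing K] {Q : Matrix m m K}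

lemma conj_diagonal_sub_smul_one (hQ : Q * Qᵀ = 1) (d : m → K) (a : K) :
    Q * diagonal d * Qᵀ - a • 1 = Q * diagonal (fun i => d i - a) * Qᵀ := by
  have hdiag : diagonal (fun i => d i - a) = diagonal d - diagonal fun _ => a := by
    rw [← diagonal_sub]
  rw [hdiag, Matrix.mul_sub, Matrix.sub_mul, ← smul_one_eq_diagonal, Matrix.mul_smul,
    Matrix.smul_mul, Matrix.mul_one, hQ]

lemma dotProduct_conj_diagonal_mulVec (d v : m → K) :
    v ⬝ᵥ ((Q * diagonal d * Qᵀ) *ᵥ v) = ∑ i, d i * (Qᵀ *ᵥ v) i ^ 2 := by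
  rw [← mulVec_mulVec, ← mulVec_mulVec, dotProduct_mulVec, ← mulVec_transpose, dotProduct]
  refine Finset.sum_congr rfl fun i _ => ?_
  rw [mulVec_diagonal]
  ring

lemma sum_transpose_mulVec_sq (hQ : Q * Qᵀ = 1) (v : m → K) :
    ∑ i, (Qᵀ *ᵥ v) i ^ 2 = v ⬝ᵥ v := by
  have h := dotProduct_conj_diagonal_mulVec (Q := Q) (fun _ => 1) v
  rw [diagonal_one, Matrix.mul_one, hQ, one_mulVec] at h
  simpa only [one_mul] using h.symm

end CommRing

section Field

variable [Field K] {Q : Matrix m m K}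

lemma inv_diagonal_of_ne_zero {d : m → K} (hd : ∀ i, d i ≠ 0) :
    (diagonal d)⁻¹ = diagonal fun i => (d i)⁻¹ := by
  refine inv_eq_right_inv ?_
  rw [diagonal_mul_diagonal, ← diagonal_one]
  exact congrArg diagonal (funext fun i => mul_inv_cancel₀ (hd i))

lemma inv_conj_diagonal (hQ : Qᵀ * Q = 1) {d : m → K} (hd : ∀ i, d i ≠ 0) :
    (Q * diagonal d * Qᵀ)⁻¹ = Q * diagonal (fun i => (d i)⁻¹) * Qᵀ := by
  rw [Matrix.mul_inv_rev, Matrix.mul_inv_rev, inv_eq_left_inv (mul_eq_one_comm.mp hQ),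
    inv_eq_left_inv hQ, inv_diagonal_of_ne_zero hd, Matrix.mul_assoc]

lemma dotProduct_inv_conj_diagonal_sub_smul_one_mulVec (hQ : Qᵀ * Q = 1) {d : m → K} {a : K}
    (hd : ∀ i, d i ≠ a) (v : m → K) :
    v ⬝ᵥ ((Q * diagonal d * Qᵀ - a • 1)⁻¹ *ᵥ v) = ∑ i, (Qᵀ *ᵥ v) i ^ 2 / (d i - a) := by
  rw [conj_diagonal_sub_smul_one (mul_eq_one_comm.mp hQ),
    inv_conj_diagonal hQ fun i => sub_ne_zero.mpr (hd i), dotProduct_conj_diagonal_mulVec]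
  exact Finset.sum_congr rfl fun i _ => inv_mul_eq_div _ _

end Field

/-- Explicit eigenbasis formulas for the restricted dual function
`g(α) = -(q + (α/2)𝟏)ᵀ(P - αI)⁻¹(q + (α/2)𝟏)` and for `g(α) - g(0)`. -/
theorem stmt_11 (n : ℕ) (Q : Matrix (Fin n) (Fin n) ℝ) (hQ : Qᵀ * Q = 1)
    (ω : Fin n → ℝ) (hω : ∀ i, 0 < ω i)
    (P : Matrix (Fin n) (Fin n) ℝ) (hP : P = Q * Matrix.diagonal ω * Qᵀ)
    (ωmin : ℝ) (hωmin : IsLeast (Set.range ω) ωmin)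
    (q s qt : Fin n → ℝ)
    (hs : s = Qᵀ *ᵥ (fun _ => 1)) (hqt : qt = Qᵀ *ᵥ q)
    (g : ℝ → ℝ)
    (hg : ∀ α, g α = -((q + (α / 2) • (fun _ => 1 : Fin n → ℝ)) ⬝ᵥ
      ((P - α • (1 : Matrix (Fin n) (Fin n) ℝ))⁻¹ *ᵥ
        (q + (α / 2) • (fun _ => 1 : Fin n → ℝ))))) :
    ∀ α : ℝ, 0 ≤ α → α < ωmin →
      g α = -∑ i, (qt i ^ 2 + α * s i * qt i + (1 / 4) * α ^ 2 * s i ^ 2) / (ω i - α) ∧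
      g α - g 0 = α * n / 4
        - α * ∑ i, (1 - α / ω i) * ((qt i + (1 / 2) * ω i * s i) / (ω i - α)) ^ 2 := by
  have hg_eigen : ∀ β, (∀ i, β < ω i) → g β = -∑ i, (qt i + β / 2 * s i) ^ 2 / (ω i - β) := by
    intro β hβ
    rw [hg, hP, dotProduct_inv_conj_diagonal_sub_smul_one_mulVec hQ fun i => (hβ i).ne',
      mulVec_add, mulVec_smul, ← hs, ← hqt]
    rfl
  have hs_sq : ∑ i, s i ^ 2 = n := by
    rw [hs, sum_transpose_mulVec_sq (mul_eq_one_comm.mp hQ)]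
    simp [dotProduct]
  intro α _ hαmin
  have hα : ∀ i, α < ω i := fun i => hαmin.trans_le (hωmin.2 ⟨i, rfl⟩)
  refine ⟨?_, ?_⟩
  · rw [hg_eigen α hα]
    congr 1
    exact Finset.sum_congr rfl fun i _ => by ring
  · rw [hg_eigen α hα, hg_eigen 0 hω, ← hs_sq]
    simp only [← Finset.sum_neg_distrib, Finset.mul_sum, Finset.sum_div, ← Finset.sum_sub_distrib]
    refine Finset.sum_congr rfl fun i _ => ?_
    have := (sub_pos.mpr (hα i)).ne'
    have := (hω i).ne'
    field_simp
    ring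
end

section
/- Let P = Q diag(ω) Qᵀ with Q an orthogonal n×n real matrix and ω ∈ ℝⁿ with all ωᵢ > 0; let ω_min = minᵢ ωᵢ and ω_max = maxᵢ ωᵢ, q ∈ ℝⁿ, s = Qᵀ𝟏, q̃ = Qᵀq, and for 0 ≤ α < ω_min define g(α) = −(q + (α/2)𝟏)ᵀ (P − αI)⁻¹ (q + (α/2)𝟏). Suppose α* ∈ [0, ω_min) satisfies the first-order condition Σᵢ ((q̃ᵢ + (1/2)ωᵢ sᵢ)/(ωᵢ − α*))² = n/4. Then g(α*) − g(0) = Σᵢ (α*²/ωᵢ) ((q̃ᵢ + (1/2)ωᵢ sᵢ)/(ωᵢ − α*))² ≥ n α*² / (4 ω_max). -/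
/-!
In the eigenbasis of `P` the dual function separates:
`g(α) = -∑ᵢ (q̃ᵢ + α sᵢ / 2)² / (ωᵢ - α)`. With `rᵢ = (q̃ᵢ + ωᵢ sᵢ / 2) / (ωᵢ - α)`, each term of
`g(α) - g(0)` equals `(α² / ωᵢ) rᵢ² + α (sᵢ² / 4 - rᵢ²)`, and the correction terms sum to zero
because `‖s‖² = n` and the first-order condition says `∑ᵢ rᵢ² = n / 4`. The lower bound is then
`ωᵢ ≤ ω_max` applied termwise.
-/

open Matrix Finset

variable {ι : Type*} [Fintype ι]

namespace Matrix

variable [DecidableEq ι]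

section CommRing

variable {R : Type*} [CommRing R] {Q : Matrix ι ι R}

theorem dotProduct_transpose_mulVec_self (hQ : Qᵀ * Q = 1) (v : ι → R) :
    (Qᵀ *ᵥ v) ⬝ᵥ (Qᵀ *ᵥ v) = v ⬝ᵥ v := by
  rw [dotProduct_mulVec, vecMul_transpose, mulVec_mulVec, mul_eq_one_comm.mp hQ, one_mulVec]

theorem dotProduct_mul_diagonal_mul_transpose_mulVec (Q : Matrix ι ι R) (d v : ι → R) :
    v ⬝ᵥ (Q * diagonal d * Qᵀ) *ᵥ v = ∑ i, d i * (Qᵀ *ᵥ v) i ^ 2 := by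
  rw [Matrix.mul_assoc, ← mulVec_mulVec, ← mulVec_mulVec, dotProduct_mulVec,
    ← mulVec_transpose, dotProduct_comm]
  simp only [dotProduct, mulVec_diagonal]
  exact sum_congr rfl fun i _ => by ring

theorem mul_diagonal_mul_transpose_sub_smul_one (hQ : Qᵀ * Q = 1) (d : ι → R) (α : R) :
    Q * diagonal d * Qᵀ - α • 1 = Q * diagonal (fun i => d i - α) * Qᵀ := by
  have hdiag : diagonal (fun i => d i - α) = diagonal d - α • 1 := by
    rw [← diagonal_sub, ← smul_one_eq_diagonal]
  rw [hdiag, Matrix.mul_sub, Matrix.sub_mul, Matrix.mul_smul, Matrix.smul_mul, Matrix.mul_one,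
    mul_eq_one_comm.mp hQ]

end CommRing

section Field

variable {K : Type*} [Field K] {Q : Matrix ι ι K}

theorem inv_mul_diagonal_mul_transpose (hQ : Qᵀ * Q = 1) {d : ι → K} (hd : ∀ i, d i ≠ 0) :
    (Q * diagonal d * Qᵀ)⁻¹ = Q * diagonal d⁻¹ * Qᵀ := by
  apply inv_eq_right_inv
  have hdd : diagonal d * diagonal d⁻¹ = 1 := by
    rw [diagonal_mul_diagonal, ← diagonal_one]
    exact congrArg diagonal (funext fun i => mul_inv_cancel₀ (hd i))
  calc Q * diagonal d * Qᵀ * (Q * diagonal d⁻¹ * Qᵀ)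
      = Q * (diagonal d * (Qᵀ * Q) * diagonal d⁻¹) * Qᵀ := by simp only [Matrix.mul_assoc]
    _ = 1 := by rw [hQ, Matrix.mul_one, hdd, Matrix.mul_one, mul_eq_one_comm.mp hQ]

theorem dotProduct_inv_sub_smul_one_mulVec (hQ : Qᵀ * Q = 1) {ω : ι → K} {α : K}
    (hα : ∀ i, ω i - α ≠ 0) (v : ι → K) :
    v ⬝ᵥ ((Q * diagonal ω * Qᵀ - α • 1)⁻¹ *ᵥ v) = ∑ i, (Qᵀ *ᵥ v) i ^ 2 / (ω i - α) := by
  rw [mul_diagonal_mul_transpose_sub_smul_one hQ, inv_mul_diagonal_mul_transpose hQ hα,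
    dotProduct_mul_diagonal_mul_transpose_mulVec]
  exact sum_congr rfl fun i _ => by simp [div_eq_inv_mul]

end Field

end Matrix

section DualGap

variable {K : Type*} [Field K] [CharZero K]

theorem sq_div_sub_sq_div_sub_eq {t s w α : K} (hw : w ≠ 0) (hwα : w - α ≠ 0) :
    t ^ 2 / w - (t + α / 2 * s) ^ 2 / (w - α) =
      α ^ 2 / w * ((t + 1 / 2 * w * s) / (w - α)) ^ 2 +
        α * (s ^ 2 / 4 - ((t + 1 / 2 * w * s) / (w - α)) ^ 2) := by
  field_simp
  ring

theorem sum_sq_div_sub_sum_sq_div_sub_eq {t s ω : ι → K} {α c : K} (hω : ∀ i, ω i ≠ 0)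
    (hωα : ∀ i, ω i - α ≠ 0) (hs : ∑ i, s i ^ 2 = c)
    (hfoc : ∑ i, ((t i + 1 / 2 * ω i * s i) / (ω i - α)) ^ 2 = c / 4) :
    ∑ i, t i ^ 2 / ω i - ∑ i, (t i + α / 2 * s i) ^ 2 / (ω i - α) =
      ∑ i, α ^ 2 / ω i * ((t i + 1 / 2 * ω i * s i) / (ω i - α)) ^ 2 := by
  rw [← sum_sub_distrib]
  simp only [sq_div_sub_sq_div_sub_eq (hω _) (hωα _)]
  rw [sum_add_distrib, ← mul_sum, sum_sub_distrib, ← sum_div, hs, hfoc, sub_self, mul_zero,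
    add_zero]

end DualGap

theorem div_mul_sum_le_sum_div_mul {ω c : ι → ℝ} {M b : ℝ} (hb : 0 ≤ b) (hω : ∀ i, 0 < ω i)
    (hM : ∀ i, ω i ≤ M) (hc : ∀ i, 0 ≤ c i) :
    b / M * ∑ i, c i ≤ ∑ i, b / ω i * c i := by
  rw [mul_sum]
  exact sum_le_sum fun i _ =>
    mul_le_mul_of_nonneg_right (div_le_div_of_nonneg_left hb (hω i) (hM i)) (hc i)

theorem stmt_14_general (n : ℕ) (Q : Matrix (Fin n) (Fin n) ℝ) (hQ : Qᵀ * Q = 1)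
    (ω : Fin n → ℝ) (hω : ∀ i, 0 < ω i)
    (P : Matrix (Fin n) (Fin n) ℝ) (hP : P = Q * Matrix.diagonal ω * Qᵀ)
    (ωmin ωmax : ℝ) (hωmin : IsLeast (Set.range ω) ωmin)
    (hωmax : IsGreatest (Set.range ω) ωmax)
    (q s qt : Fin n → ℝ)
    (hs : s = Qᵀ *ᵥ (fun _ => 1)) (hqt : qt = Qᵀ *ᵥ q)
    (g : ℝ → ℝ)
    (hg : ∀ α, g α = -((q + (α / 2) • (fun _ => 1 : Fin n → ℝ)) ⬝ᵥ
      ((P - α • (1 : Matrix (Fin n) (Fin n) ℝ))⁻¹ *ᵥ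
        (q + (α / 2) • (fun _ => 1 : Fin n → ℝ)))))
    (αs : ℝ) (hαs1 : αs < ωmin)
    (hfoc : ∑ i, ((qt i + (1 / 2) * ω i * s i) / (ω i - αs)) ^ 2 = (n : ℝ) / 4) :
    g αs - g 0 = ∑ i, (αs ^ 2 / ω i) * ((qt i + (1 / 2) * ω i * s i) / (ω i - αs)) ^ 2 ∧
      (n : ℝ) * αs ^ 2 / (4 * ωmax) ≤
        ∑ i, (αs ^ 2 / ω i) * ((qt i + (1 / 2) * ω i * s i) / (ω i - αs)) ^ 2 := by
  have hωαs : ∀ i, ω i - αs ≠ 0 := fun i =>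
    (sub_pos.mpr (hαs1.trans_le (hωmin.2 (Set.mem_range_self i)))).ne'
  have hg_eq : ∀ α, (∀ i, ω i - α ≠ 0) → g α = -∑ i, (qt i + α / 2 * s i) ^ 2 / (ω i - α) := by
    intro α hα
    rw [hg, hP, dotProduct_inv_sub_smul_one_mulVec hQ hα, mulVec_add, mulVec_smul, ← hqt, ← hs]
    rfl
  have hs_sq : ∑ i, s i ^ 2 = (n : ℝ) := by
    simpa [dotProduct, sq, ← hs] using dotProduct_transpose_mulVec_self hQ (fun _ : Fin n => 1)
  refine ⟨?_, ?_⟩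
  · rw [hg_eq αs hωαs, hg_eq 0 fun i => by simpa using (hω i).ne',
      ← sum_sq_div_sub_sum_sq_div_sub_eq (fun i => (hω i).ne') hωαs hs_sq hfoc]
    simp only [zero_div, zero_mul, add_zero, sub_zero]
    ring
  · calc (n : ℝ) * αs ^ 2 / (4 * ωmax)
        = αs ^ 2 / ωmax * ∑ i, ((qt i + 1 / 2 * ω i * s i) / (ω i - αs)) ^ 2 := by
          rw [hfoc]; ring
      _ ≤ _ := div_mul_sum_le_sum_div_mul (sq_nonneg αs) hω
          (fun i => hωmax.2 (Set.mem_range_self i)) fun i => sq_nonneg _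

/-- At a stationary point `α*` of the restricted dual function (first-order condition
`∑ᵢ ((q̃ᵢ + ωᵢsᵢ/2)/(ωᵢ - α*))² = n/4`), one has
`g(α*) - g(0) = ∑ᵢ (α*²/ωᵢ)((q̃ᵢ + ωᵢsᵢ/2)/(ωᵢ - α*))² ≥ n α*² / (4 ω_max)`. -/
theorem stmt_14 (n : ℕ) (Q : Matrix (Fin n) (Fin n) ℝ) (hQ : Qᵀ * Q = 1)
    (ω : Fin n → ℝ) (hω : ∀ i, 0 < ω i)
    (P : Matrix (Fin n) (Fin n) ℝ) (hP : P = Q * Matrix.diagonal ω * Qᵀ)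
    (ωmin ωmax : ℝ) (hωmin : IsLeast (Set.range ω) ωmin)
    (hωmax : IsGreatest (Set.range ω) ωmax)
    (q s qt : Fin n → ℝ)
    (hs : s = Qᵀ *ᵥ (fun _ => 1)) (hqt : qt = Qᵀ *ᵥ q)
    (g : ℝ → ℝ)
    (hg : ∀ α, g α = -((q + (α / 2) • (fun _ => 1 : Fin n → ℝ)) ⬝ᵥ
      ((P - α • (1 : Matrix (Fin n) (Fin n) ℝ))⁻¹ *ᵥ
        (q + (α / 2) • (fun _ => 1 : Fin n → ℝ)))))
    (αs : ℝ) (hαs0 : 0 ≤ αs) (hαs1 : αs < ωmin)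
    (hfoc : ∑ i, ((qt i + (1 / 2) * ω i * s i) / (ω i - αs)) ^ 2 = (n : ℝ) / 4) :
    g αs - g 0 = ∑ i, (αs ^ 2 / ω i) * ((qt i + (1 / 2) * ω i * s i) / (ω i - αs)) ^ 2 ∧
      (n : ℝ) * αs ^ 2 / (4 * ωmax) ≤
        ∑ i, (αs ^ 2 / ω i) * ((qt i + (1 / 2) * ω i * s i) / (ω i - αs)) ^ 2 :=
  stmt_14_general n Q hQ ω hω P hP ωmin ωmax hωmin hωmax q s qt hs hqt g hg αs hαs1 hfoc
end

section
/- Let P be a symmetric n×n real matrix with strictly positive diagonal entries, q ∈ ℝⁿ, and f(x) = xᵀPx + 2qᵀx. For x ∈ ℤⁿ let g = 2(Px + q). Then x is 1-opt — i.e., f(x + c·eᵢ) ≥ f(x) for every coordinate index i and every integer c — if and only if Pᵢᵢ ≥ |gᵢ| for every i, where eᵢ denotes the i-th standard basis vector. -/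
/-!
Along the line `x + c • eᵢ` the objective is the one-variable quadratic
`f (x + c • eᵢ) = f x + c ^ 2 * Pᵢᵢ + c * gᵢ` (this is where the symmetry of `P` enters).
Such a quadratic is nonnegative at every integer `c` iff it is at `c = ±1`, i.e. iff
`|gᵢ| ≤ Pᵢᵢ`: for `c ≠ 0` we have `|c| ≤ c ^ 2`, so `c ^ 2 * Pᵢᵢ` dominates `|c * gᵢ|`.
-/

open Matrix

theorem Matrix.IsSymm.dotProduct_mulVec_add {ι R : Type*} [Fintype ι] [CommRing R]
    {P : Matrix ι ι R} (hP : P.IsSymm) (x y : ι → R) :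
    (x + y) ⬝ᵥ (P *ᵥ (x + y)) = x ⬝ᵥ (P *ᵥ x) + 2 * (y ⬝ᵥ (P *ᵥ x)) + y ⬝ᵥ (P *ᵥ y) := by
  have hxy : x ⬝ᵥ (P *ᵥ y) = y ⬝ᵥ (P *ᵥ x) := by
    rw [dotProduct_mulVec, ← mulVec_transpose, hP.eq, dotProduct_comm]
  simp only [mulVec_add, dotProduct_add, add_dotProduct, hxy]
  ring

theorem Matrix.IsSymm.dotProduct_mulVec_add_smul_single {ι R : Type*} [Fintype ι] [DecidableEq ι]
    [CommRing R] {P : Matrix ι ι R} (hP : P.IsSymm) (x : ι → R) (i : ι) (c : R) :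
    (x + c • Pi.single i 1) ⬝ᵥ (P *ᵥ (x + c • Pi.single i 1)) =
      x ⬝ᵥ (P *ᵥ x) + 2 * c * (P *ᵥ x) i + c ^ 2 * P i i := by
  rw [hP.dotProduct_mulVec_add]
  simp only [mulVec_smul, smul_dotProduct, dotProduct_smul, mulVec_single, single_dotProduct,
    smul_eq_mul, col_apply, MulOpposite.op_one, one_smul]
  ring

theorem forall_int_sq_mul_add_mul_nonneg_iff {R : Type*} [Ring R] [LinearOrder R]
    [IsStrictOrderedRing R] (a b : R) :
    (∀ c : ℤ, 0 ≤ c ^ 2 * a + c * b) ↔ |b| ≤ a := by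
  refine ⟨fun h => abs_le.2 ⟨?_, ?_⟩, fun h c => ?_⟩
  · exact neg_le.2 (by simpa [add_comm, ← neg_le_iff_add_nonneg] using h 1)
  · simpa [← sub_eq_neg_add, sub_nonneg] using h (-1)
  · have hc : |(c : R)| ≤ c ^ 2 := by
      rw [← Int.cast_abs, ← Int.natCast_natAbs]
      exact_mod_cast Int.natAbs_le_self_sq c
    calc 0 ≤ (c ^ 2 - |(c : R)|) * a := mul_nonneg (sub_nonneg.2 hc) ((abs_nonneg b).trans h)
      _ = c ^ 2 * a + -(|(c : R)| * a) := by rw [sub_mul, sub_eq_add_neg]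
      _ ≤ c ^ 2 * a + -|c * b| := by rw [abs_mul]; gcongr
      _ ≤ c ^ 2 * a + c * b := by gcongr; exact neg_abs_le _

theorem stmt_17_general (n : ℕ) (P : Matrix (Fin n) (Fin n) ℝ) (hP : P.IsSymm)
    (q : Fin n → ℝ)
    (f : (Fin n → ℝ) → ℝ)
    (hf : ∀ y, f y = y ⬝ᵥ (P *ᵥ y) + 2 * (q ⬝ᵥ y))
    (xr g : Fin n → ℝ)
    (hg : g = (2 : ℝ) • (P *ᵥ xr + q)) :
    (∀ (i : Fin n) (c : ℤ), f xr ≤ f (xr + (c : ℝ) • (Pi.single i 1 : Fin n → ℝ))) ↔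
      ∀ i, |g i| ≤ P i i := by
  have hline (i : Fin n) (c : ℝ) :
      f (xr + c • Pi.single i 1) = f xr + (c ^ 2 * P i i + c * g i) := by
    simp only [hf, hP.dotProduct_mulVec_add_smul_single, hg, dotProduct_add, dotProduct_smul,
      dotProduct_single, Pi.smul_apply, Pi.add_apply, smul_eq_mul]
    ring
  simp only [hline, le_add_iff_nonneg_right]
  exact forall_congr' fun i => forall_int_sq_mul_add_mul_nonneg_iff _ _

/-- An integer point `x` is 1-opt (no single-coordinate integer change improves `f`)
if and only if `Pᵢᵢ ≥ |gᵢ|` for all `i`, where `g = 2(Px + q)`. -/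
theorem stmt_17 (n : ℕ) (P : Matrix (Fin n) (Fin n) ℝ) (hP : P.IsSymm)
    (hPd : ∀ i, 0 < P i i) (q : Fin n → ℝ)
    (f : (Fin n → ℝ) → ℝ)
    (hf : ∀ y, f y = y ⬝ᵥ (P *ᵥ y) + 2 * (q ⬝ᵥ y))
    (x : Fin n → ℤ) (xr g : Fin n → ℝ)
    (hxr : xr = fun i => (x i : ℝ)) (hg : g = (2 : ℝ) • (P *ᵥ xr + q)) :
    (∀ (i : Fin n) (c : ℤ), f xr ≤ f (xr + (c : ℝ) • (Pi.single i 1 : Fin n → ℝ))) ↔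
      ∀ i, |g i| ≤ P i i :=
  stmt_17_general n P hP q f hf xr g hg
end

section
/- Let P be a symmetric n×n real matrix, q ∈ ℝⁿ, and f(x) = xᵀPx + 2qᵀx. Suppose α ≥ 0 and γ ∈ ℝ are such that the (n+1)×(n+1) block matrix [[P − αI, q + (α/2)𝟏], [(q + (α/2)𝟏)ᵀ, γ]] is positive semidefinite. Then f(x) ≥ −γ for every x ∈ ℝⁿ satisfying ‖x − (1/2)𝟏‖₂² ≥ n/4. In particular, since every x ∈ ℤⁿ satisfies ‖x − (1/2)𝟏‖₂² ≥ n/4, f(x) ≥ −γ for every x ∈ ℤⁿ. -/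
/-!
Testing the certificate matrix against the vector `(x, 1)` gives
`f(x) + γ ≥ α (‖x - 𝟏/2‖² - n/4)`, since `xᵀ(αI)x - α 𝟏ᵀx = α (‖x - 𝟏/2‖² - n/4)`;
the right-hand side is nonnegative outside the sphere. Integer points lie outside it because
`(k - 1/2)² - 1/4 = k (k - 1) ≥ 0` for every integer `k`.
-/

open Matrix

theorem Matrix.PosSemidef.dotProduct_mulVec_add_two_mul_dotProduct_add_nonneg
    {m : Type*} [Fintype m] {A : Matrix m m ℝ} {v : m → ℝ} {c : ℝ}
    (h : (fromBlocks A (of fun i (_ : Unit) => v i) (of fun (_ : Unit) j => v j)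
      (of fun (_ : Unit) (_ : Unit) => c)).PosSemidef) (x : m → ℝ) :
    0 ≤ x ⬝ᵥ (A *ᵥ x) + 2 * (v ⬝ᵥ x) + c := by
  have hcol : (of fun i (_ : Unit) => v i) *ᵥ 1 = v := by
    ext i; simp [mulVec, dotProduct]
  have hrow : (1 : Unit → ℝ) ⬝ᵥ ((of fun (_ : Unit) j => v j) *ᵥ x +
      (of fun (_ : Unit) (_ : Unit) => c) *ᵥ 1) = v ⬝ᵥ x + c := by
    simp [mulVec, dotProduct]
  refine (h.dotProduct_mulVec_nonneg (Sum.elim x 1)).trans_eq ?_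
  rw [star_trivial, fromBlocks_mulVec, sumElim_dotProduct_sumElim, Sum.elim_comp_inl,
    Sum.elim_comp_inr, dotProduct_add, hcol, hrow, dotProduct_comm x v]
  ring

theorem sum_sq_sub_half {m : Type*} [Fintype m] (x : m → ℝ) :
    ∑ i, (x i - 1 / 2) ^ 2 = x ⬝ᵥ x - ∑ i, x i + Fintype.card m / 4 := by
  simp only [dotProduct, fun i => show (x i - 1 / 2) ^ 2 = x i * x i - x i + 1 / 4 by ring,
    Finset.sum_add_distrib, Finset.sum_sub_distrib]
  simp [div_eq_mul_inv]

theorem neg_le_dotProduct_mulVec_add_of_posSemidef_fromBlocks {m : Type*} [Fintype m] [DecidableEq m]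
    {P : Matrix m m ℝ} {q : m → ℝ} {α γ : ℝ} (hα : 0 ≤ α)
    (hpsd : (fromBlocks (P - α • (1 : Matrix m m ℝ))
        (of fun i (_ : Unit) => (q + (α / 2) • (fun _ => 1 : m → ℝ)) i)
        (of fun (_ : Unit) j => (q + (α / 2) • (fun _ => 1 : m → ℝ)) j)
        (of fun (_ : Unit) (_ : Unit) => γ)).PosSemidef)
    {x : m → ℝ} (hx : (Fintype.card m : ℝ) / 4 ≤ ∑ i, (x i - 1 / 2) ^ 2) :
    -γ ≤ x ⬝ᵥ (P *ᵥ x) + 2 * (q ⬝ᵥ x) := by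
  have hcert := hpsd.dotProduct_mulVec_add_two_mul_dotProduct_add_nonneg x
  have hshift : x ⬝ᵥ ((P - α • 1) *ᵥ x) + 2 * ((q + (α / 2) • fun _ => 1) ⬝ᵥ x) + γ =
      x ⬝ᵥ (P *ᵥ x) + 2 * (q ⬝ᵥ x) + γ -
        α * (∑ i, (x i - 1 / 2) ^ 2 - Fintype.card m / 4) := by
    rw [sum_sq_sub_half, sub_mulVec, smul_mulVec, one_mulVec, dotProduct_sub, dotProduct_smul,
      add_dotProduct, smul_dotProduct, show (fun _ => 1 : m → ℝ) = 1 from rfl, one_dotProduct]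
    simp only [smul_eq_mul]
    ring
  linarith [mul_nonneg hα (sub_nonneg.2 hx)]

theorem Int.quarter_le_sq_sub_half (k : ℤ) : (1 / 4 : ℝ) ≤ ((k : ℝ) - 1 / 2) ^ 2 := by
  have hk : (0 : ℤ) ≤ k * (k - 1) := by
    rcases le_or_gt 1 k with h | h <;> nlinarith
  have hk' : (0 : ℝ) ≤ k * (k - 1) := by exact_mod_cast hk
  nlinarith

theorem card_div_four_le_sum_sq_intCast_sub_half {m : Type*} [Fintype m] (x : m → ℤ) :
    (Fintype.card m : ℝ) / 4 ≤ ∑ i, ((x i : ℝ) - 1 / 2) ^ 2 := by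
  simpa [div_eq_mul_inv] using
    Finset.sum_le_sum fun i (_ : i ∈ Finset.univ) => Int.quarter_le_sq_sub_half (x i)

theorem stmt_19_general (n : ℕ) (P : Matrix (Fin n) (Fin n) ℝ)
    (q : Fin n → ℝ) (α γ : ℝ) (hα : 0 ≤ α)
    (hpsd : (Matrix.fromBlocks (P - α • (1 : Matrix (Fin n) (Fin n) ℝ))
        (Matrix.of fun i (_ : Unit) => (q + (α / 2) • (fun _ => 1 : Fin n → ℝ)) i)
        (Matrix.of fun (_ : Unit) j => (q + (α / 2) • (fun _ => 1 : Fin n → ℝ)) j)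
        (Matrix.of fun (_ : Unit) (_ : Unit) => γ)).PosSemidef) :
    (∀ x : Fin n → ℝ, (n : ℝ) / 4 ≤ ∑ i, (x i - 1 / 2) ^ 2 →
        -γ ≤ x ⬝ᵥ (P *ᵥ x) + 2 * (q ⬝ᵥ x)) ∧
      (∀ x : Fin n → ℤ,
        (n : ℝ) / 4 ≤ ∑ i, ((x i : ℝ) - 1 / 2) ^ 2 ∧
          -γ ≤ (fun i => (x i : ℝ)) ⬝ᵥ (P *ᵥ fun i => (x i : ℝ))
              + 2 * (q ⬝ᵥ fun i => (x i : ℝ))) := by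
  have hreal (x : Fin n → ℝ) (hx : (n : ℝ) / 4 ≤ ∑ i, (x i - 1 / 2) ^ 2) :
      -γ ≤ x ⬝ᵥ (P *ᵥ x) + 2 * (q ⬝ᵥ x) :=
    neg_le_dotProduct_mulVec_add_of_posSemidef_fromBlocks hα hpsd
      (by rwa [Fintype.card_fin])
  refine ⟨hreal, fun x => ?_⟩
  have hx : (n : ℝ) / 4 ≤ ∑ i, ((x i : ℝ) - 1 / 2) ^ 2 := by
    simpa using card_div_four_le_sum_sq_intCast_sub_half x
  exact ⟨hx, hreal _ hx⟩

/-- S-procedure certificate: if `α ≥ 0` and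
`[[P - αI, q + (α/2)𝟏], [(q + (α/2)𝟏)ᵀ, γ]] ⪰ 0`, then `f(x) ≥ -γ` for every real `x`
outside the sphere `‖x - 𝟏/2‖² ≥ n/4`; in particular every integer point lies outside
this sphere, so `f(x) ≥ -γ` on `ℤⁿ`. -/
theorem stmt_19 (n : ℕ) (P : Matrix (Fin n) (Fin n) ℝ) (hP : P.IsSymm)
    (q : Fin n → ℝ) (α γ : ℝ) (hα : 0 ≤ α)
    (hpsd : (Matrix.fromBlocks (P - α • (1 : Matrix (Fin n) (Fin n) ℝ))
        (Matrix.of fun i (_ : Unit) => (q + (α / 2) • (fun _ => 1 : Fin n → ℝ)) i)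
        (Matrix.of fun (_ : Unit) j => (q + (α / 2) • (fun _ => 1 : Fin n → ℝ)) j)
        (Matrix.of fun (_ : Unit) (_ : Unit) => γ)).PosSemidef) :
    (∀ x : Fin n → ℝ, (n : ℝ) / 4 ≤ ∑ i, (x i - 1 / 2) ^ 2 →
        -γ ≤ x ⬝ᵥ (P *ᵥ x) + 2 * (q ⬝ᵥ x)) ∧
      (∀ x : Fin n → ℤ,
        (n : ℝ) / 4 ≤ ∑ i, ((x i : ℝ) - 1 / 2) ^ 2 ∧
          -γ ≤ (fun i => (x i : ℝ)) ⬝ᵥ (P *ᵥ fun i => (x i : ℝ))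
              + 2 * (q ⬝ᵥ fun i => (x i : ℝ))) :=
  stmt_19_general n P q α γ hα hpsd
end
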